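/- arXiv:1803.11272 — 5 statements merged into one kernel-verified Lean document; each statement's English description precedes it below -/
import Mathlib

section
/- Let a, b, c, d be positive reals with a > (4/3)c and b > (4/3)d (stability conditions). Define the Backus-averaged quantities for two equally weighted layers: c3333 = (((1/a)+(1/b))/2)^{-1}, c1133 = ((( (a−2c)/a + (b−2d)/b )/2)) · c3333, c2323 = (((1/c)+(1/d))/2)^{-1}. Then the condition δ = 0, i.e. c1133 = c3333 − 2·c2323, is equivalent to (c − d)(bc − ad) = 0. -/
/-!
Writing the Backus averages in closed form, `c3333 = 2ab/(a+b)`, `c2323 = 2cd/(c+d)` and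
`c1133 = c3333 - 2(bc+ad)/(a+b)`, the condition `δ = 0` becomes
`(bc+ad)/(a+b) = 2cd/(c+d)`. Clearing denominators, the difference
`(bc+ad)(c+d) - 2cd(a+b)` factors as `(c-d)(bc-ad)`.
-/

section BackusAverage

variable {K : Type*} [Field K]

theorem inv_half_add_inv_eq {x y : K} (hx : x ≠ 0) (hy : y ≠ 0) :
    ((1 / x + 1 / y) / 2)⁻¹ = 2 * x * y / (x + y) := by
  rw [one_div_add_one_div hx hy, div_div, inv_div]
  ring

theorem backus_c1133_eq [NeZero (2 : K)] {a b c d : K} (ha : a ≠ 0) (hb : b ≠ 0) :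
    (((a - 2 * c) / a + (b - 2 * d) / b) / 2) * ((1 / a + 1 / b) / 2)⁻¹ =
      ((1 / a + 1 / b) / 2)⁻¹ - 2 * ((b * c + a * d) / (a + b)) := by
  rw [inv_half_add_inv_eq ha hb]
  field_simp
  ring

end BackusAverage

theorem delta_zero_iff_general (a b c d : ℝ) (ha : 0 < a) (hb : 0 < b) (hc : 0 < c) (hd : 0 < d) :
    let c3333 : ℝ := ((1 / a + 1 / b) / 2)⁻¹
    let c1133 : ℝ := (((a - 2 * c) / a + (b - 2 * d) / b) / 2) * c3333
    let c2323 : ℝ := ((1 / c + 1 / d) / 2)⁻¹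
    (c1133 = c3333 - 2 * c2323 ↔ (c - d) * (b * c - a * d) = 0) := by
  dsimp only
  have hab : a + b ≠ 0 := by positivity
  have hcd : c + d ≠ 0 := by positivity
  have hfactor : (b * c + a * d) * (c + d) - 2 * c * d * (a + b) = (c - d) * (b * c - a * d) := by
    ring
  rw [backus_c1133_eq ha.ne' hb.ne', sub_right_inj, mul_right_inj' two_ne_zero,
    inv_half_add_inv_eq hc.ne' hd.ne', div_eq_div_iff hab hcd, ← sub_eq_zero, hfactor]

/-- For the Backus average of two equally weighted isotropic layers `(a, c)` and `(b, d)`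
satisfying the stability conditions, the Thomsen-δ condition
`c1133 = c3333 − 2·c2323` is equivalent to `(c − d)(bc − ad) = 0`. -/
theorem delta_zero_iff (a b c d : ℝ) (ha : 0 < a) (hb : 0 < b) (hc : 0 < c) (hd : 0 < d)
    (hac : a > 4 / 3 * c) (hbd : b > 4 / 3 * d) :
    let c3333 : ℝ := ((1 / a + 1 / b) / 2)⁻¹
    let c1133 : ℝ := (((a - 2 * c) / a + (b - 2 * d) / b) / 2) * c3333
    let c2323 : ℝ := ((1 / c + 1 / d) / 2)⁻¹
    (c1133 = c3333 - 2 * c2323 ↔ (c - d) * (b * c - a * d) = 0) :=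
  delta_zero_iff_general a b c d ha hb hc hd
end

section
/- Let a, b, c, d be positive reals. Define c3333 = (((1/a)+(1/b))/2)^{-1}, and c1111 = c3333 · ((( (a−2c)/a + (b−2d)/b )/2))^2 + ( (4(a−c)c/a + 4(b−d)d/b )/2 ). Then the condition ε = 0, i.e. c1111 = c3333, is equivalent to (c − d)(c − d + b − a) = 0. -/
/-! Over the common denominator `a b (a + b)`, the difference `c1111 − c3333` of the Backus
moduli collapses to `−2 (c − d)(c − d + b − a) / (a + b)`, which vanishes exactly when its
numerator does. -/

namespace Backus

variable {a b : ℝ} (c d : ℝ)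

noncomputable def c3333 (a b : ℝ) : ℝ := ((1 / a + 1 / b) / 2)⁻¹

noncomputable def c1111 (a b c d : ℝ) : ℝ :=
  c3333 a b * ((((a - 2 * c) / a + (b - 2 * d) / b) / 2)) ^ 2
    + (4 * (a - c) * c / a + 4 * (b - d) * d / b) / 2

theorem c3333_eq (ha : a ≠ 0) (hb : b ≠ 0) : c3333 a b = 2 * a * b / (a + b) := by
  unfold c3333
  field_simp
  ring

theorem c1111_sub_c3333 (ha : a ≠ 0) (hb : b ≠ 0) (hab : a + b ≠ 0) :
    c1111 a b c d - c3333 a b = -2 * ((c - d) * (c - d + b - a)) / (a + b) := by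
  rw [c1111, c3333_eq ha hb]
  field_simp
  ring

theorem c1111_eq_c3333_iff (ha : a ≠ 0) (hb : b ≠ 0) (hab : a + b ≠ 0) :
    c1111 a b c d = c3333 a b ↔ (c - d) * (c - d + b - a) = 0 := by
  rw [← sub_eq_zero, c1111_sub_c3333 c d ha hb hab, div_eq_zero_iff, or_iff_left hab,
    mul_eq_zero, or_iff_right (by norm_num)]

end Backus

theorem epsilon_zero_iff_general (a b c d : ℝ) (ha : 0 < a) (hb : 0 < b) :
    let c3333 : ℝ := ((1 / a + 1 / b) / 2)⁻¹
    let c1111 : ℝ := c3333 * ((((a - 2 * c) / a + (b - 2 * d) / b) / 2)) ^ 2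
      + (4 * (a - c) * c / a + 4 * (b - d) * d / b) / 2
    (c1111 = c3333 ↔ (c - d) * (c - d + b - a) = 0) :=
  Backus.c1111_eq_c3333_iff c d ha.ne' hb.ne' (add_pos ha hb).ne'

/-- For the Backus average of two equally weighted isotropic layers `(a, c)` and `(b, d)`,
the Thomsen-ε condition `c1111 = c3333` is equivalent to `(c − d)(c − d + b − a) = 0`. -/
theorem epsilon_zero_iff (a b c d : ℝ) (ha : 0 < a) (hb : 0 < b) (hc : 0 < c) (hd : 0 < d) :
    let c3333 : ℝ := ((1 / a + 1 / b) / 2)⁻¹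
    let c1111 : ℝ := c3333 * ((((a - 2 * c) / a + (b - 2 * d) / b) / 2)) ^ 2
      + (4 * (a - c) * c / a + 4 * (b - d) * d / b) / 2
    (c1111 = c3333 ↔ (c - d) * (c - d + b - a) = 0) :=
  epsilon_zero_iff_general a b c d ha hb
end

section
/- Let a, b, c, d be positive reals satisfying the stability conditions a > (4/3)c and b > (4/3)d. If both (c − d)(bc − ad) = 0 and (c − d)(c − d + b − a) = 0 hold, then c = d. In other words, for a two-layer Backus medium, δ = 0 and ε = 0 together imply the constant-rigidity condition c = d (isotropy of the average). -/
theorem eq_and_eq_of_mul_eq_mul_of_sub_eq_sub {R : Type*} [CommRing R] [IsDomain R]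
    {a b c d : R} (hcd : c ≠ d) (hcross : b * c = a * d) (hdiff : a - b = c - d) :
    a = c ∧ b = d := by
  have hprod : (b - d) * (c - d) = 0 := by linear_combination hcross + d * hdiff
  have hbd : b = d :=
    sub_eq_zero.mp ((mul_eq_zero.mp hprod).resolve_right (sub_ne_zero.mpr hcd))
  exact ⟨by linear_combination hdiff + hbd, hbd⟩

theorem delta_and_epsilon_zero_implies_isotropy_general (a b c d : ℝ)
    (hc : 0 < c)
    (hac : a > 4 / 3 * c)
    (h1 : (c - d) * (b * c - a * d) = 0)
    (h2 : (c - d) * (c - d + b - a) = 0) :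
    c = d := by
  by_contra hne
  have hcd : c - d ≠ 0 := sub_ne_zero.mpr hne
  have hcross : b * c = a * d := sub_eq_zero.mp ((mul_eq_zero.mp h1).resolve_left hcd)
  have hdiff : a - b = c - d := by
    linear_combination -(mul_eq_zero.mp h2).resolve_left hcd
  obtain ⟨rfl, -⟩ := eq_and_eq_of_mul_eq_mul_of_sub_eq_sub hne hcross hdiff
  linarith

/-- Under the stability conditions, `δ = 0` and `ε = 0` (in their factored forms)
together force constant rigidity `c = d`. -/
theorem delta_and_epsilon_zero_implies_isotropy (a b c d : ℝ)
    (ha : 0 < a) (hb : 0 < b) (hc : 0 < c) (hd : 0 < d)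
    (hac : a > 4 / 3 * c) (hbd : b > 4 / 3 * d)
    (h1 : (c - d) * (b * c - a * d) = 0)
    (h2 : (c - d) * (c - d + b - a) = 0) :
    c = d :=
  delta_and_epsilon_zero_implies_isotropy_general a b c d hc hac h1 h2
end

section
/- If a stack of isotropic layers has constant shear modulus c_{2323} = μ (but possibly varying c_{1111}), then the Backus average satisfies c_{1212}^TI = c_{2323}^TI = μ, c_{1133}^TI = c_{3333}^TI − 2μ, and c_{1111}^TI = c_{3333}^TI, i.e. the resulting medium is isotropic; in particular all three Thomsen parameters γ, δ, ε vanish. -/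
/-!
With a common shear modulus `μ`, the two layer averages entering `c1133` and `c1111` are
affine in the mean compliance `m = 𝔼ᵢ aᵢ⁻¹`, because `(aᵢ - 2μ)/aᵢ = 1 - 2μ aᵢ⁻¹` and
`4(aᵢ - μ)μ/aᵢ = 4μ - 4μ² aᵢ⁻¹`.
Since `c3333 = m⁻¹`, this gives `c1133 = (1 - 2μm)/m = c3333 - 2μ` and
`c1111 = (1 - 2μm)²/m + 4μ - 4μ²m = 1/m = c3333`.
-/

open Finset
open scoped BigOperators

lemma sum_div_eq_expect {n : ℕ} {K : Type*} [Field K] [CharZero K] (f : Fin n → K) :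
    (∑ i, f i) / n = 𝔼 i, f i := by
  rw [Fintype.expect_eq_sum_div_card, Fintype.card_fin]

namespace Backus

variable {K ι : Type*} [Field K] [CharZero K] [Fintype ι] [Nonempty ι]

lemma expect_add_mul_inv (x y : K) (a : ι → K) :
    𝔼 i, (x + y * (a i)⁻¹) = x + y * 𝔼 i, (a i)⁻¹ := by
  rw [expect_add_distrib, Fintype.expect_const, ← mul_expect]

variable {a : ι → K} (ha : ∀ i, a i ≠ 0) (μ : K)
include ha

lemma expect_sub_two_mul_div_self :
    𝔼 i, (a i - 2 * μ) / a i = 1 + (-2 * μ) * 𝔼 i, (a i)⁻¹ := by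
  rw [← expect_add_mul_inv]
  congr! 1 with i
  field_simp [ha i]
  ring

lemma expect_four_mul_sub_mul_div_self :
    𝔼 i, 4 * (a i - μ) * μ / a i = 4 * μ + (-4 * μ ^ 2) * 𝔼 i, (a i)⁻¹ := by
  rw [← expect_add_mul_inv]
  congr! 1 with i
  field_simp [ha i]
  ring

variable (hm : 𝔼 i, (a i)⁻¹ ≠ 0)
include hm

lemma c1133_eq_of_const_shear :
    (𝔼 i, (a i - 2 * μ) / a i) * (𝔼 i, (a i)⁻¹)⁻¹ = (𝔼 i, (a i)⁻¹)⁻¹ - 2 * μ := by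
  rw [expect_sub_two_mul_div_self ha]
  generalize 𝔼 i, (a i)⁻¹ = m at hm ⊢
  field_simp
  ring

lemma c1111_eq_of_const_shear :
    (𝔼 i, (a i)⁻¹)⁻¹ * (𝔼 i, (a i - 2 * μ) / a i) ^ 2 + 𝔼 i, 4 * (a i - μ) * μ / a i
      = (𝔼 i, (a i)⁻¹)⁻¹ := by
  rw [expect_sub_two_mul_div_self ha, expect_four_mul_sub_mul_div_self ha]
  generalize 𝔼 i, (a i)⁻¹ = m at hm ⊢
  field_simp
  ring

end Backus

lemma thomsen_eq_zero_of_isotropic {K : Type*} [Field K] {c1111 c3333 c1133 c2323 c1212 : K}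
    (h1212 : c1212 = c2323) (h1133 : c1133 = c3333 - 2 * c2323) (h1111 : c1111 = c3333) :
    (c1212 - c2323) / (2 * c2323) = 0 ∧
      ((c1133 + c2323) ^ 2 - (c3333 - c2323) ^ 2) / (2 * c3333 * (c3333 - c2323)) = 0 ∧
      (c1111 - c3333) / (2 * c3333) = 0 := by
  subst h1212 h1133 h1111
  refine ⟨?_, ?_, ?_⟩ <;> ring

/-- Constant rigidity gives an isotropic Backus average: if all layers share the shear
modulus `μ`, then `c1212 = c2323 = μ`, `c1133 = c3333 − 2μ`, `c1111 = c3333`, and the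
Thomsen parameters `γ`, `δ`, `ε` all vanish. -/
theorem constant_rigidity_isotropic (n : ℕ) (hn : 0 < n) (μ : ℝ) (hμ : 0 < μ)
    (a : Fin n → ℝ) (ha : ∀ i, a i > 4 / 3 * μ) :
    let c3333 : ℝ := ((∑ i, (a i)⁻¹) / n)⁻¹
    let c2323 : ℝ := ((∑ _i : Fin n, μ⁻¹) / n)⁻¹
    let c1212 : ℝ := (∑ _i : Fin n, μ) / n
    let c1133 : ℝ := ((∑ i, (a i - 2 * μ) / a i) / n) * c3333
    let c1111 : ℝ := c3333 * ((∑ i, (a i - 2 * μ) / a i) / n) ^ 2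
      + (∑ i, 4 * (a i - μ) * μ / a i) / n
    c1212 = μ ∧ c2323 = μ ∧ c1133 = c3333 - 2 * μ ∧ c1111 = c3333 ∧
      (c1212 - c2323) / (2 * c2323) = 0 ∧
      ((c1133 + c2323) ^ 2 - (c3333 - c2323) ^ 2) / (2 * c3333 * (c3333 - c2323)) = 0 ∧
      (c1111 - c3333) / (2 * c3333) = 0 := by
  intro c3333 c2323 c1212 c1133 c1111
  have : Nonempty (Fin n) := Fin.pos_iff_nonempty.mp hn
  have ha_pos : ∀ i, 0 < a i := fun i => (by positivity : (0 : ℝ) < 4 / 3 * μ).trans (ha i)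
  have hm : 𝔼 i, (a i)⁻¹ ≠ 0 := (expect_pos (fun i _ => inv_pos.2 (ha_pos i)) univ_nonempty).ne'
  have ha0 : ∀ i, a i ≠ 0 := fun i => (ha_pos i).ne'
  have h1212 : c1212 = μ := by simp only [c1212, sum_div_eq_expect, Fintype.expect_const]
  have h2323 : c2323 = μ := by simp only [c2323, sum_div_eq_expect, Fintype.expect_const, inv_inv]
  have h1133 : c1133 = c3333 - 2 * μ := by
    simpa only [c1133, c3333, sum_div_eq_expect] using Backus.c1133_eq_of_const_shear ha0 μ hm
  have h1111 : c1111 = c3333 := by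
    simpa only [c1111, c3333, sum_div_eq_expect] using Backus.c1111_eq_of_const_shear ha0 μ hm
  exact ⟨h1212, h2323, h1133, h1111,
    thomsen_eq_zero_of_isotropic (h1212.trans h2323.symm) (by rw [h1133, h2323]) h1111⟩
end

section
/- For a two-layer stack with parameters (a, c) and (b, d), the expression ((((a−2c)/a + (b−2d)/b)/2)·H_a + 2H_c − H_a), where H_a = (((1/a)+(1/b))/2)^{-1} and H_c = (((1/c)+(1/d))/2)^{-1}, equals zero if and only if (c − d)(bc − ad) = 0, for all positive a, b, c, d. -/
/-! Both harmonic means are `2xy/(x+y)`; clearing denominators, the left-hand side is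
`-2 (c - d)(bc - ad) / ((a + b)(c + d))`, whose denominator is positive. -/

section

variable {K : Type*} [Field K]

theorem half_inv_add_inv_inv (x y : K) (hx : x ≠ 0) (hy : y ≠ 0) :
    ((1 / x + 1 / y) / 2)⁻¹ = 2 * x * y / (x + y) := by
  rw [div_add_div _ _ hx hy, div_div, inv_div]
  ring

theorem backus_delta_eq [NeZero (2 : K)] (a b c d : K) (ha : a ≠ 0) (hb : b ≠ 0) (hc : c ≠ 0) (hd : d ≠ 0)
    (hab : a + b ≠ 0) (hcd : c + d ≠ 0) :
    (((a - 2 * c) / a + (b - 2 * d) / b) / 2) * ((1 / a + 1 / b) / 2)⁻¹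
        + 2 * ((1 / c + 1 / d) / 2)⁻¹ - ((1 / a + 1 / b) / 2)⁻¹
      = -2 * ((c - d) * (b * c - a * d)) / ((a + b) * (c + d)) := by
  rw [half_inv_add_inv_inv a b ha hb, half_inv_add_inv_inv c d hc hd]
  field_simp
  ring

end

/-- The algebraic identity underlying `δ = 0 ⟺ (c−d)(bc−ad) = 0` for a two-layer
Backus average. -/
theorem delta_identity :
    ∀ a b c d : ℝ, 0 < a → 0 < b → 0 < c → 0 < d →
      ((((a - 2 * c) / a + (b - 2 * d) / b) / 2) * ((1 / a + 1 / b) / 2)⁻¹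
          + 2 * ((1 / c + 1 / d) / 2)⁻¹ - ((1 / a + 1 / b) / 2)⁻¹ = 0
        ↔ (c - d) * (b * c - a * d) = 0) := by
  intro a b c d ha hb hc hd
  have hden : (a + b) * (c + d) ≠ 0 := by positivity
  rw [backus_delta_eq a b c d ha.ne' hb.ne' hc.ne' hd.ne' (by positivity) (by positivity),
    div_eq_zero_iff, or_iff_left hden, mul_eq_zero, or_iff_right (by norm_num)]
end
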